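/- Let L be a left ideal of R and F = {f_i}_{i∈J} a subset of L. (i) Suppose F generates L as a left ideal and has the property that every nonzero f ∈ L has a presentation f = Σ_j v_j f_j, in which the v_j are homogeneous elements of R and f_j ∈ F (possibly with repetitions), such that v_j f_j ≠ 0 and d(HT(v_j HT(f_j))) ≼ d(f) for all j; then ⟨HT(L)] = ⟨HT(F)]. (ii) Conversely, if ≺ is a well-order on Γ and ⟨HT(L)] = ⟨HT(F)], then F is a generating set of L (as a left ideal) having the presentation property stated in (i). -/

import Mathlib

/-!
STATEMENT 3.  Γ a totally ordered semigroup, R a Γ-graded K-algebra, L a left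
ideal of R and F ⊆ L.
(i) If F generates L as a left ideal and every nonzero f ∈ L admits a
    presentation f = Σ_j v_j f_j with v_j homogeneous, f_j ∈ F, v_j f_j ≠ 0 and
    d(HT(v_j HT(f_j))) ≼ d(f), then ⟨HT(L)] = ⟨HT(F)].
(ii) If ≺ is a well-order on Γ and ⟨HT(L)] = ⟨HT(F)], then F generates L as a
    left ideal and has the presentation property of (i).
-/

open Function
open scoped DirectSum

universe u v w

variable (K : Type u) [Field K] (Γ : Type v) [Semigroup Γ] [LinearOrder Γ]

variable {R : Type w} [Ring R] [Algebra K R]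

/-- `ℛ` is a `Γ`-grading of the `K`-algebra `R`. -/
structure IsAlgGrading [DecidableEq Γ] (ℛ : Γ → Submodule K R) : Prop where
  internal : DirectSum.IsInternal ℛ
  mul_mem : ∀ {γ₁ γ₂ : Γ} {x y : R}, x ∈ ℛ γ₁ → y ∈ ℛ γ₂ → x * y ∈ ℛ (γ₁ * γ₂)

/-- `F*_γR = ⋃_{γ'≺γ} F_{γ'}R`. -/
def gradeFilStar (ℛ : Γ → Submodule K R) (γ : Γ) : Submodule K R := ⨆ γ' < γ, ℛ γ'

/-- `IsHT ℛ f h γ` : `h` is the head term of `f`, of degree `d(f) = γ`. -/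
def IsHT (ℛ : Γ → Submodule K R) (f h : R) (γ : Γ) : Prop :=
  h ∈ ℛ γ ∧ h ≠ 0 ∧ f - h ∈ gradeFilStar K Γ ℛ γ

/-- The set of head terms of elements of `S`. -/
def HTset (ℛ : Γ → Submodule K R) (S : Set R) : Set R :=
  {h | ∃ f ∈ S, ∃ γ, IsHT K Γ ℛ f h γ}

/-- The presentation property of Proposition 2.4: every nonzero `f ∈ L` can be
written as `f = Σ_j v_j f_j` with `v_j ∈ R_{α_j}` homogeneous, `f_j ∈ F`
(possibly repeated), `v_j f_j ≠ 0`, and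
`d(HT(v_j HT(f_j))) = α_j · d(HT(f_j)) ≼ d(f)` for all `j`. -/
def HasLeftHTPresentations (ℛ : Γ → Submodule K R) (L : Submodule R R) (F : Set R) : Prop :=
  ∀ f ∈ L, f ≠ 0 → ∀ γf : Γ, (∃ hf, IsHT K Γ ℛ f hf γf) →
    ∃ (n : ℕ) (v g : Fin n → R) (α δ : Fin n → Γ),
      f = ∑ j, v j * g j ∧
      ∀ j : Fin n,
        g j ∈ F ∧ v j * g j ≠ 0 ∧
        v j ∈ ℛ (α j) ∧
        (∃ h, IsHT K Γ ℛ (g j) h (δ j)) ∧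
        α j * δ j ≤ γf

section Helpers

set_option linter.unusedSectionVars false

variable {K Γ}
variable [DecidableEq Γ] {ℛ : Γ → Submodule K R}

/-- The decomposition map of an internal direct sum. -/
noncomputable def Dq (hint : DirectSum.IsInternal ℛ) : R ≃ₗ[K] ⨁ γ, ℛ γ :=
  (LinearEquiv.ofBijective (DirectSum.coeLinearMap ℛ) hint).symm

lemma Dq_same (hint : DirectSum.IsInternal ℛ) {γ : Γ} {x : R} (hx : x ∈ ℛ γ) :
    Dq hint x γ = ⟨x, hx⟩ :=
  hint.ofBijective_coeLinearMap_of_mem hx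

lemma Dq_ne (hint : DirectSum.IsInternal ℛ) {γ γ' : Γ} (h : γ ≠ γ') {x : R} (hx : x ∈ ℛ γ) :
    Dq hint x γ' = 0 :=
  hint.ofBijective_coeLinearMap_of_mem_ne h hx

open Classical in
lemma Dq_sum (hint : DirectSum.IsInternal ℛ) (x : R) :
    x = ∑ γ ∈ (Dq hint x).support, ((Dq hint x) γ : R) := by
  have h0 : (∑ γ ∈ (Dq hint x).support,
      DirectSum.of (fun γ => (ℛ γ : Submodule K R)) γ (Dq hint x γ)) = Dq hint x :=
    DirectSum.sum_support_of _
  have h2 := congrArg (DirectSum.coeLinearMap ℛ) h0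
  rw [map_sum] at h2
  simp only [DirectSum.coeLinearMap_of] at h2
  have h3 : DirectSum.coeLinearMap ℛ (Dq hint x) = x :=
    (LinearEquiv.ofBijective (DirectSum.coeLinearMap ℛ) hint).apply_symm_apply x
  rw [h3] at h2
  exact h2.symm

lemma star_mono {γ1 γ2 : Γ} (h : γ1 ≤ γ2) :
    gradeFilStar K Γ ℛ γ1 ≤ gradeFilStar K Γ ℛ γ2 :=
  iSup₂_le fun γ' hγ' => le_iSup₂ (f := fun γ (_ : γ < γ2) => ℛ γ) γ' (lt_of_lt_of_le hγ' h)

lemma mem_star_of_lt {γ γ0 : Γ} (h : γ < γ0) {x : R} (hx : x ∈ ℛ γ) :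
    x ∈ gradeFilStar K Γ ℛ γ0 :=
  le_iSup₂ (f := fun γ' (_ : γ' < γ0) => ℛ γ') γ h hx

lemma Dq_star (hint : DirectSum.IsInternal ℛ) {γ0 : Γ} {x : R}
    (hx : x ∈ gradeFilStar K Γ ℛ γ0) {γ : Γ} (hγ : ¬ γ < γ0) :
    Dq hint x γ = 0 := by
  have hle : gradeFilStar K Γ ℛ γ0 ≤ LinearMap.ker
      ((DFinsupp.lapply γ : (⨁ γ, ℛ γ) →ₗ[K] ℛ γ).comp (Dq hint).toLinearMap) := by
    refine iSup₂_le fun γ' hγ' y hy => ?_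
    have hne : γ' ≠ γ := fun hh => hγ (hh ▸ hγ')
    simp only [LinearMap.mem_ker, LinearMap.comp_apply, DFinsupp.lapply_apply,
      LinearEquiv.coe_toLinearMap]
    exact Dq_ne hint hne hy
  exact LinearMap.mem_ker.mp (hle hx)

lemma mem_star_iff (hint : DirectSum.IsInternal ℛ) {γ0 : Γ} {x : R} :
    x ∈ gradeFilStar K Γ ℛ γ0 ↔ ∀ γ, ¬ γ < γ0 → Dq hint x γ = 0 := by
  constructor
  · exact fun hx γ hγ => Dq_star hint hx hγ
  · intro h
    classical
    rw [Dq_sum hint x]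
    refine Submodule.sum_mem _ fun γ hγ => ?_
    by_cases hlt : γ < γ0
    · exact mem_star_of_lt hlt (Dq hint x γ).2
    · exact absurd (h γ hlt) (DFinsupp.mem_support_iff.mp hγ)

lemma eq_zero_of_mem_star (hint : DirectSum.IsInternal ℛ) {γ : Γ} {x : R}
    (hx : x ∈ ℛ γ) (hs : x ∈ gradeFilStar K Γ ℛ γ) : x = 0 := by
  have h1 := Dq_star hint hs (lt_irrefl γ)
  rw [Dq_same hint hx] at h1
  simpa using Subtype.ext_iff.mp h1

lemma deg_unique (hint : DirectSum.IsInternal ℛ) {x : R} {γ1 γ2 : Γ}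
    (h1 : x ∈ ℛ γ1) (h2 : x ∈ ℛ γ2) (hx : x ≠ 0) : γ1 = γ2 := by
  by_contra hne
  have h0 := Dq_ne hint hne h1
  rw [Dq_same hint h2] at h0
  exact hx (by simpa using Subtype.ext_iff.mp h0)

lemma isHT_lt_of_star (hint : DirectSum.IsInternal ℛ) {x h : R} {γ γ0 : Γ}
    (hHT : IsHT K Γ ℛ x h γ) (hx : x ∈ gradeFilStar K Γ ℛ γ0) : γ < γ0 := by
  by_contra hn
  have hx' : x ∈ gradeFilStar K Γ ℛ γ := star_mono (not_lt.mp hn) hx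
  have hh : h ∈ gradeFilStar K Γ ℛ γ := by
    have h2 := Submodule.sub_mem _ hx' hHT.2.2
    simpa using h2
  exact hHT.2.1 (eq_zero_of_mem_star hint hHT.1 hh)

lemma exists_isHT (hint : DirectSum.IsInternal ℛ) {x : R} (hx : x ≠ 0) :
    ∃ h γ, IsHT K Γ ℛ x h γ := by
  classical
  have hy : Dq hint x ≠ 0 := by
    intro h0
    apply hx
    have := congrArg (Dq hint).symm h0
    simpa using this
  have hne : (Dq hint x).support.Nonempty := by
    rw [Finset.nonempty_iff_ne_empty]
    exact fun hemp => hy (DFinsupp.support_eq_empty.mp hemp)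
  set γm := (Dq hint x).support.max' hne with hγm
  refine ⟨(Dq hint x γm : R), γm, (Dq hint x γm).2, ?_, ?_⟩
  · have hm : γm ∈ (Dq hint x).support := (Dq hint x).support.max'_mem hne
    have := DFinsupp.mem_support_iff.mp hm
    intro hc
    exact this (by exact_mod_cast Subtype.ext hc)
  · rw [mem_star_iff hint]
    intro γ hγ
    have hxh : Dq hint (x - (Dq hint x γm : R)) γ
        = Dq hint x γ - Dq hint ((Dq hint x γm : R)) γ := by
      rw [map_sub]; rfl
    rw [hxh]
    by_cases hgm : γ = γm
    · rw [hgm, Dq_same hint (Dq hint x γm).2, Subtype.coe_eta, sub_self]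
    · have h2 : Dq hint ((Dq hint x γm : R)) γ = 0 :=
        Dq_ne hint (fun hh => hgm hh.symm) (Dq hint x γm).2
      have h3 : Dq hint x γ = 0 := by
        by_contra hne3
        exact hγ (lt_of_le_of_ne
          ((Dq hint x).support.le_max' γ (DFinsupp.mem_support_iff.mpr hne3)) hgm)
      rw [h2, h3, sub_zero]

lemma mul_mem_star [CovariantClass Γ Γ (· * ·) (· < ·)] (hgr : IsAlgGrading K Γ ℛ)
    {v x : R} {α δ : Γ} (hv : v ∈ ℛ α) (hx : x ∈ gradeFilStar K Γ ℛ δ) :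
    v * x ∈ gradeFilStar K Γ ℛ (α * δ) := by
  classical
  rw [show v * x = ∑ γ ∈ (Dq hgr.internal x).support, v * (Dq hgr.internal x γ : R) by
    rw [← Finset.mul_sum]
    conv_lhs => rw [Dq_sum hgr.internal x]]
  refine Submodule.sum_mem _ fun γ hγ => ?_
  have hlt : γ < δ := by
    by_contra hge
    exact DFinsupp.mem_support_iff.mp hγ (Dq_star hgr.internal hx hge)
  exact mem_star_of_lt (mul_lt_mul_right hlt α) (hgr.mul_mem hv (Dq hgr.internal x γ).2)

lemma finset_sum_to_fin {β : Type*} {M : Type*} [AddCommMonoid M] (t : Finset β) (c : β → M) :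
    ∃ (n : ℕ) (q : Fin n → β), (∑ p ∈ t, c p = ∑ j, c (q j)) ∧ ∀ j, q j ∈ t := by
  classical
  refine ⟨t.card, fun j => (t.equivFin.symm j).1, ?_, fun j => (t.equivFin.symm j).2⟩
  rw [← Finset.sum_coe_sort t c]
  exact (Equiv.sum_comp t.equivFin.symm (fun p => c p.1)).symm

lemma span_homog (hgr : IsAlgGrading K Γ ℛ) {s : Set R} {x : R} {γ : Γ}
    (hx : x ∈ ℛ γ) (hxs : x ∈ Submodule.span R s)
    (hs : ∀ h ∈ s, ∃ δ, h ∈ ℛ δ ∧ h ≠ 0) :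
    ∃ (n : ℕ) (v h : Fin n → R) (α δ : Fin n → Γ),
      x = ∑ j, v j * h j ∧
      ∀ j, h j ∈ s ∧ v j * h j ≠ 0 ∧ v j ∈ ℛ (α j) ∧ h j ∈ ℛ (δ j) ∧ h j ≠ 0 ∧
        α j * δ j = γ := by
  classical
  have hint := hgr.internal
  obtain ⟨n0, u, hsel, hsum⟩ := Submodule.mem_span_set'.mp hxs
  choose δ0 hδ0 hne0 using fun i : Fin n0 => hs _ (hsel i).2
  set c : (Σ _ : Fin n0, Γ) → R := fun p => (Dq hint (u p.1) p.2 : R) * ((hsel p.1 : R)) with hc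
  set T : Finset (Σ _ : Fin n0, Γ) := Finset.univ.sigma fun i => (Dq hint (u i)).support with hT
  have hxT : x = ∑ p ∈ T, c p := by
    rw [← hsum, hT, Finset.sum_sigma]
    refine Finset.sum_congr rfl fun i _ => ?_
    rw [smul_eq_mul]
    conv_lhs => rw [Dq_sum hint (u i)]
    rw [Finset.sum_mul]
  set T1 := T.filter (fun p => p.2 * δ0 p.1 = γ ∧ c p ≠ 0) with hT1
  have cmem : ∀ p : (Σ _ : Fin n0, Γ), c p ∈ ℛ (p.2 * δ0 p.1) := fun p =>
    hgr.mul_mem (Dq hint (u p.1) p.2).2 (hδ0 p.1)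
  have key : x = ∑ p ∈ T1, c p := by
    have hdiff : x - ∑ p ∈ T1, c p = ∑ p ∈ T \ T1, c p := by
      rw [hxT]
      exact (Finset.sum_sdiff_eq_sub (Finset.filter_subset _ _)).symm
    have hmem1 : ∑ p ∈ T1, c p ∈ ℛ γ := by
      refine Submodule.sum_mem _ fun p hp => ?_
      have hcond := (Finset.mem_filter.mp hp).2.1
      rw [← hcond]
      exact cmem p
    have hmem : x - ∑ p ∈ T1, c p ∈ ℛ γ := Submodule.sub_mem _ hx hmem1
    have hzero : Dq hint (x - ∑ p ∈ T1, c p) γ = 0 := by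
      rw [hdiff, map_sum, DFinsupp.finset_sum_apply]
      refine Finset.sum_eq_zero fun p hp => ?_
      rcases eq_or_ne (c p) 0 with h0 | h0
      · rw [h0, map_zero]; rfl
      · have hpT := (Finset.mem_sdiff.mp hp).1
        have hnot := (Finset.mem_sdiff.mp hp).2
        have hnec : p.2 * δ0 p.1 ≠ γ := fun he =>
          hnot (Finset.mem_filter.mpr ⟨hpT, he, h0⟩)
        exact Dq_ne hint hnec (cmem p)
    rw [Dq_same hint hmem] at hzero
    have := Subtype.ext_iff.mp hzero
    exact sub_eq_zero.mp (by simpa using this)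
  obtain ⟨n, q, hq, hqmem⟩ := finset_sum_to_fin T1 c
  refine ⟨n, fun j => (Dq hint (u (q j).1) (q j).2 : R), fun j => ((hsel (q j).1 : R)),
    fun j => (q j).2, fun j => δ0 (q j).1, ?_, ?_⟩
  · rw [key, hq]
  · intro j
    have hmemT1 := hqmem j
    rw [hT1, Finset.mem_filter] at hmemT1
    exact ⟨(hsel (q j).1).2, hmemT1.2.2, (Dq hint (u (q j).1) (q j).2).2,
      hδ0 (q j).1, hne0 (q j).1, hmemT1.2.1⟩

end Helpers

theorem statement3 [DecidableEq Γ]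
    [CovariantClass Γ Γ (· * ·) (· < ·)] [CovariantClass Γ Γ (swap (· * ·)) (· < ·)]
    (ℛ : Γ → Submodule K R) (hgr : IsAlgGrading K Γ ℛ)
    -- L a left ideal of R and F ⊆ L
    (L : Submodule R R) (F : Set R) (hFL : F ⊆ (L : Set R)) :
    -- (i)
    ((Submodule.span R F = L ∧ HasLeftHTPresentations K Γ ℛ L F) →
      Submodule.span R (HTset K Γ ℛ (L : Set R)) = Submodule.span R (HTset K Γ ℛ F)) ∧
    -- (ii)
    (WellFoundedLT Γ →
      Submodule.span R (HTset K Γ ℛ (L : Set R)) = Submodule.span R (HTset K Γ ℛ F) →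
      Submodule.span R F = L ∧ HasLeftHTPresentations K Γ ℛ L F) := by
  classical
  constructor
  · -- part (i)
    rintro ⟨hspan, hpres⟩
    apply le_antisymm
    · rw [Submodule.span_le]
      rintro hf ⟨f, hfL, γf, hHT⟩
      have hf0 : f ≠ 0 := by
        rintro rfl
        have hmem : hf ∈ gradeFilStar K Γ ℛ γf := by
          have h2 := Submodule.neg_mem _ hHT.2.2
          simpa using h2
        exact hHT.2.1 (eq_zero_of_mem_star hgr.internal hHT.1 hmem)
      obtain ⟨n, v, g, α, δ, hsum, hprop⟩ := hpres f hfL hf0 γf ⟨hf, hHT⟩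
      choose h hh using fun j => (hprop j).2.2.2.1
      set S := ∑ j ∈ Finset.univ.filter (fun j => α j * δ j = γf), v j * h j with hS
      have hS2 : S = ∑ j, if α j * δ j = γf then v j * h j else 0 :=
        Finset.sum_filter _ _
      have hSmem : S ∈ ℛ γf := by
        refine Submodule.sum_mem _ fun j hj => ?_
        rw [← (Finset.mem_filter.mp hj).2]
        exact hgr.mul_mem (hprop j).2.2.1 (hh j).1
      have hstar : hf - S ∈ gradeFilStar K Γ ℛ γf := by
        have hfS : hf - S =
            (hf - f) + ∑ j, (v j * g j - if α j * δ j = γf then v j * h j else 0) := by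
          rw [Finset.sum_sub_distrib, ← hS2, ← hsum]
          abel
        rw [hfS]
        refine Submodule.add_mem _ ?_ (Submodule.sum_mem _ fun j _ => ?_)
        · have h2 := Submodule.neg_mem _ hHT.2.2
          simpa using h2
        · by_cases hc : α j * δ j = γf
          · rw [if_pos hc, ← mul_sub]
            exact star_mono (le_of_eq hc) (mul_mem_star hgr (hprop j).2.2.1 (hh j).2.2)
          · rw [if_neg hc, sub_zero]
            have hlt : α j * δ j < γf := lt_of_le_of_ne (hprop j).2.2.2.2 hc
            have h1 : v j * h j ∈ gradeFilStar K Γ ℛ γf :=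
              mem_star_of_lt hlt (hgr.mul_mem (hprop j).2.2.1 (hh j).1)
            have h2 : v j * (g j - h j) ∈ gradeFilStar K Γ ℛ γf :=
              star_mono (le_of_lt hlt) (mul_mem_star hgr (hprop j).2.2.1 (hh j).2.2)
            have h3 : v j * g j = v j * h j + v j * (g j - h j) := by
              rw [mul_sub]; abel
            rw [h3]
            exact Submodule.add_mem _ h1 h2
      have hzero : hf - S = 0 :=
        eq_zero_of_mem_star hgr.internal (Submodule.sub_mem _ hHT.1 hSmem) hstar
      have hfeq : hf = S := sub_eq_zero.mp hzero
      rw [hfeq, hS]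
      refine Submodule.sum_mem _ fun j _ => ?_
      rw [show v j * h j = v j • h j from rfl]
      exact Submodule.smul_mem _ _ (Submodule.subset_span ⟨g j, (hprop j).1, δ j, hh j⟩)
    · exact Submodule.span_mono (fun h hmem => by
        obtain ⟨f, hfF, γ, ht⟩ := hmem
        exact ⟨f, hFL hfF, γ, ht⟩)
  · -- part (ii)
    intro hwfi heq
    haveI := hwfi
    have main : ∀ γf : Γ, ∀ f, f ∈ L → f ≠ 0 → (∃ hf, IsHT K Γ ℛ f hf γf) →
        f ∈ Submodule.span R F ∧
        ∃ (n : ℕ) (v g : Fin n → R) (α δ : Fin n → Γ),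
          f = ∑ j, v j * g j ∧
          ∀ j : Fin n, g j ∈ F ∧ v j * g j ≠ 0 ∧ v j ∈ ℛ (α j) ∧
            (∃ h, IsHT K Γ ℛ (g j) h (δ j)) ∧ α j * δ j ≤ γf := by
      intro γf0
      induction γf0 using WellFoundedLT.induction with
      | _ γf ih =>
      intro f hfL hf0 hex
      obtain ⟨hf, hHT⟩ := hex
      -- head term of f lies in the span of head terms of F
      have hfHTL : hf ∈ Submodule.span R (HTset K Γ ℛ F) := by
        rw [← heq]
        exact Submodule.subset_span ⟨f, hfL, γf, hHT⟩
      have hshom : ∀ h ∈ HTset K Γ ℛ F, ∃ δ, h ∈ ℛ δ ∧ h ≠ 0 := by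
        rintro h ⟨g, hg, δ, h1, h2, _⟩
        exact ⟨δ, h1, h2⟩
      obtain ⟨n, v, h, α, δ, hsum, hprop⟩ := span_homog hgr hHT.1 hfHTL hshom
      -- choose g j ∈ F with head term h j of degree δ j
      have hgex : ∀ j, ∃ g, g ∈ F ∧ IsHT K Γ ℛ g (h j) (δ j) := by
        intro j
        obtain ⟨g, hgF, γ', hHT'⟩ := (hprop j).1
        have hδeq : γ' = δ j :=
          deg_unique hgr.internal hHT'.1 (hprop j).2.2.2.1 hHT'.2.1
        exact ⟨g, hgF, hδeq ▸ hHT'⟩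
      choose g hgF hgHT using hgex
      -- the remainder f' = f - Σ v j * g j
      set f' := f - ∑ j, v j * g j with hf'
      have hstar : f' ∈ gradeFilStar K Γ ℛ γf := by
        have hrw : f' = (f - hf) - ∑ j, v j * (g j - h j) := by
          rw [hf']
          have : ∑ j, v j * (g j - h j) = ∑ j, v j * g j - ∑ j, v j * h j := by
            rw [← Finset.sum_sub_distrib]
            exact Finset.sum_congr rfl fun j _ => by rw [mul_sub]
          rw [this, ← hsum]
          abel
        rw [hrw]
        refine Submodule.sub_mem _ hHT.2.2 (Submodule.sum_mem _ fun j _ => ?_)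
        have := mul_mem_star hgr (hprop j).2.2.1 (hgHT j).2.2
        rw [(hprop j).2.2.2.2.2] at this
        exact this
      have hvgne : ∀ j : Fin n, v j * g j ≠ 0 := by
        intro j hc
        have h1 : v j * h j = -(v j * (g j - h j)) := by
          have heq2 : v j * g j = v j * h j + v j * (g j - h j) := by
            rw [mul_sub]; abel
          rw [hc] at heq2
          exact eq_neg_of_add_eq_zero_left heq2.symm
        have h2 : v j * h j ∈ gradeFilStar K Γ ℛ γf := by
          rw [h1]
          refine Submodule.neg_mem _ ?_
          have := mul_mem_star hgr (hprop j).2.2.1 (hgHT j).2.2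
          rw [(hprop j).2.2.2.2.2] at this
          exact this
        have h3 : v j * h j ∈ ℛ γf := by
          rw [← (hprop j).2.2.2.2.2]
          exact hgr.mul_mem (hprop j).2.2.1 (hprop j).2.2.2.1
        exact (hprop j).2.1 (eq_zero_of_mem_star hgr.internal h3 h2)
      have hsummem : ∑ j, v j * g j ∈ Submodule.span R F := by
        refine Submodule.sum_mem _ fun j _ => ?_
        rw [show v j * g j = v j • g j from rfl]
        exact Submodule.smul_mem _ _ (Submodule.subset_span (hgF j))
      have hsumL : ∑ j, v j * g j ∈ L := by
        refine Submodule.sum_mem _ fun j _ => ?_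
        rw [show v j * g j = v j • g j from rfl]
        exact Submodule.smul_mem _ _ (hFL (hgF j))
      rcases eq_or_ne f' 0 with hf'0 | hf'0
      · -- f = Σ v j * g j
        have hfeq : f = ∑ j, v j * g j := by
          have := sub_eq_zero.mp hf'0
          exact this
        constructor
        · rw [hfeq]; exact hsummem
        · exact ⟨n, v, g, α, δ, hfeq, fun j =>
            ⟨hgF j, hvgne j, (hprop j).2.2.1, ⟨h j, hgHT j⟩,
              le_of_eq (hprop j).2.2.2.2.2⟩⟩
      · -- recurse on f'
        obtain ⟨h', γ', hHT'⟩ := exists_isHT hgr.internal hf'0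
        have hlt : γ' < γf := isHT_lt_of_star hgr.internal hHT' hstar
        have hf'L : f' ∈ L := Submodule.sub_mem _ hfL hsumL
        obtain ⟨hsp', m, w, k, β, ε, hsum2, hprop2⟩ :=
          ih γ' hlt f' hf'L hf'0 ⟨h', hHT'⟩
        have hfeq : f = ∑ j, v j * g j + f' := by rw [hf']; abel
        constructor
        · rw [hfeq]
          exact Submodule.add_mem _ hsummem hsp'
        · refine ⟨n + m, Fin.append v w, Fin.append g k, Fin.append α β,
            Fin.append δ ε, ?_, ?_⟩
          · rw [hfeq, hsum2, Fin.sum_univ_add]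
            congr 1
            · exact Finset.sum_congr rfl fun j _ => by
                rw [Fin.append_left, Fin.append_left]
            · exact Finset.sum_congr rfl fun j _ => by
                rw [Fin.append_right, Fin.append_right]
          · intro j
            refine Fin.addCases (fun i => ?_) (fun i => ?_) j
            · simp only [Fin.append_left]
              exact ⟨hgF i, hvgne i, (hprop i).2.2.1, ⟨h i, hgHT i⟩,
                le_of_eq (hprop i).2.2.2.2.2⟩
            · simp only [Fin.append_right]
              obtain ⟨p1, p2, p3, p4, p5⟩ := hprop2 i
              exact ⟨p1, p2, p3, p4, le_trans p5 (le_of_lt hlt)⟩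
    constructor
    · apply le_antisymm
      · rw [Submodule.span_le]; exact hFL
      · intro f hfL
        rcases eq_or_ne f 0 with rfl | hf0
        · exact Submodule.zero_mem _
        · obtain ⟨h', γ', hHT'⟩ := exists_isHT hgr.internal hf0
          exact (main γ' f hfL hf0 ⟨h', hHT'⟩).1
    · intro f hfL hf0 γf hex
      exact (main γf f hfL hf0 hex).2
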